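/- Let g : X × Ω → ℝ with each g(·,ω) in a normed space H ⊆ L²(Π), and let f ∈ H with ‖g(·,ω)‖_H ≤ M for all ω. Suppose: (A1) there is a sequence ε_n > 0 such that for any sequence A_n → ∞, the posterior probability P_n(‖f − g‖_n > A_n ε_n) → 0 as n → ∞; (A2) there is a sequence γ_n → 0 and B > 0 with sup_{‖h‖_H ≤ 1} |(1/n) Σ_{i=1}^n h(x_i) − Π[h]| ≤ B γ_n for all n large enough. Then for any sequence C_n → ∞, P_n(|Π[f] − Π[g]| > C_n max(ε_n, γ_n)) → 0 as n → ∞. -/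

import Mathlib

/-!
Write `h = f - g ω`. The integration error `Π[h]` splits into the empirical mean of `h`, which the
Cauchy–Schwarz inequality bounds by the empirical norm `‖h‖ₙ`, and the quadrature error of the
equal-weight rule at `h`, which by (A2) and homogeneity is at most `B γₙ ‖h‖_H ≤ B γₙ (‖f‖_H + M)`.
Hence `|Π[f] - Π[g]| > Cₙ max(εₙ, γₙ)` forces `‖f - g‖ₙ > Aₙ εₙ` with
`Aₙ = Cₙ - B (‖f‖_H + M) → ∞`, an event of vanishing posterior probability by (A1).
-/

open MeasureTheory Finset Filter

lemma abs_mean_le_sqrt_mean_sq {ι : Type*} [Fintype ι] (a : ι → ℝ) :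
    |(1 / Fintype.card ι : ℝ) * ∑ i, a i| ≤ Real.sqrt ((1 / Fintype.card ι : ℝ) * ∑ i, a i ^ 2) := by
  rw [← Real.sqrt_sq_eq_abs]
  refine Real.sqrt_le_sqrt ?_
  simpa [div_eq_inv_mul] using sum_div_card_sq_le_sum_sq_div_card (s := univ) (f := a)

lemma tendsto_toReal_measure_of_eventually_subset {α Ω : Type*} [MeasurableSpace Ω]
    {l : Filter α} {μ : α → Measure Ω} [∀ i, IsFiniteMeasure (μ i)] {s t : α → Set Ω}
    (ht : Tendsto (fun i => (μ i (t i)).toReal) l (nhds 0)) (hst : ∀ᶠ i in l, s i ⊆ t i) :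
    Tendsto (fun i => (μ i (s i)).toReal) l (nhds 0) :=
  squeeze_zero' (.of_forall fun _ => ENNReal.toReal_nonneg)
    (hst.mono fun _ hi => ENNReal.toReal_mono (measure_ne_top _ _) (measure_mono hi)) ht

section Quadrature

variable {X H : Type*} [MeasurableSpace X] [NormedAddCommGroup H] [NormedSpace ℝ H]
  (P : Measure X) (ι : H →ₗ[ℝ] X → ℝ) (hint : ∀ h : H, Integrable (ι h) P)

noncomputable def quadratureError {n : ℕ} (x : Fin n → X) : H →ₗ[ℝ] ℝ where
  toFun h := (1 / n : ℝ) * ∑ i, ι h (x i) - ∫ y, ι h y ∂P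
  map_add' u v := by
    simp only [map_add, Pi.add_apply, sum_add_distrib, integral_add (hint u) (hint v)]
    ring
  map_smul' c u := by
    simp only [map_smul, Pi.smul_apply, smul_eq_mul, ← mul_sum, integral_const_mul,
      RingHom.id_apply]
    ring

@[simp]
lemma quadratureError_apply {n : ℕ} (x : Fin n → X) (h : H) :
    quadratureError P ι hint x h = (1 / n : ℝ) * ∑ i, ι h (x i) - ∫ y, ι h y ∂P :=
  rfl

lemma abs_quadratureError_le_mul_norm {n : ℕ} {x : Fin n → X} {c : ℝ}
    (hc : ∀ h : H, ‖h‖ ≤ 1 → |quadratureError P ι hint x h| ≤ c) (h : H) :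
    |quadratureError P ι hint x h| ≤ c * ‖h‖ := by
  simpa using LinearMap.bound_of_ball_bound' one_pos c (quadratureError P ι hint x)
    (fun z hz => hc z (mem_closedBall_zero_iff.mp hz)) h

lemma abs_integral_sub_le {n : ℕ} {x : Fin n → X} {c : ℝ}
    (hc : ∀ h : H, ‖h‖ ≤ 1 → |quadratureError P ι hint x h| ≤ c) (u v : H) :
    |∫ y, ι u y ∂P - ∫ y, ι v y ∂P| ≤
      Real.sqrt ((1 / n : ℝ) * ∑ i, (ι u (x i) - ι v (x i)) ^ 2) + c * ‖u - v‖ := by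
  have hmean := abs_mean_le_sqrt_mean_sq fun i => ι (u - v) (x i)
  have herr := abs_quadratureError_le_mul_norm P ι hint hc (u - v)
  simp only [Fintype.card_fin, map_sub, Pi.sub_apply] at hmean
  simp only [map_sub, quadratureError_apply] at herr
  rw [sum_sub_distrib, mul_sub] at hmean
  calc |∫ y, ι u y ∂P - ∫ y, ι v y ∂P|
      = |((1 / n : ℝ) * ∑ i, ι u (x i) - (1 / n : ℝ) * ∑ i, ι v (x i)) -
          (((1 / n : ℝ) * ∑ i, ι u (x i) - ∫ y, ι u y ∂P) -
            ((1 / n : ℝ) * ∑ i, ι v (x i) - ∫ y, ι v y ∂P))| := by ring_nf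
    _ ≤ _ := (abs_sub _ _).trans (add_le_add hmean herr)

end Quadrature

theorem bpni_concentration_general {X : Type*} [MeasurableSpace X] {Ω : Type*} [MeasurableSpace Ω]
    (P : Measure X)
    {H : Type*} [NormedAddCommGroup H] [NormedSpace ℝ H]
    (ι : H →ₗ[ℝ] X → ℝ) (hint : ∀ h : H, Integrable (ι h) P)
    (x : (n : ℕ) → Fin n → X)
    (g : Ω → H) (f : H) (M : ℝ) (hM : ∀ ω, ‖g ω‖ ≤ M)
    (Post : ℕ → Measure Ω) (hPost : ∀ n, IsProbabilityMeasure (Post n))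
    (ε γ : ℕ → ℝ)
    (hA1 : ∀ A : ℕ → ℝ, Tendsto A atTop atTop →
      Tendsto (fun n => (Post n {ω | A n * ε n <
        Real.sqrt ((1 / n : ℝ) * ∑ i, (ι f (x n i) - ι (g ω) (x n i)) ^ 2)}).toReal)
        atTop (nhds 0))
    (B : ℝ) (hB : 0 < B)
    (hA2 : ∃ N : ℕ, ∀ n ≥ N, ∀ h : H, ‖h‖ ≤ 1 →
      |(1 / n : ℝ) * ∑ i, ι h (x n i) - ∫ y, ι h y ∂P| ≤ B * γ n)
    (C : ℕ → ℝ) (hC : Tendsto C atTop atTop) :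
    Tendsto (fun n => (Post n {ω |
        C n * max (ε n) (γ n) < |∫ y, ι f y ∂P - ∫ y, ι (g ω) y ∂P|}).toReal)
      atTop (nhds 0) := by
  obtain ⟨N, hN⟩ := hA2
  set A : ℕ → ℝ := fun n => C n - B * (‖f‖ + M)
  have hA : Tendsto A atTop atTop := tendsto_atTop_add_const_right _ _ hC
  refine tendsto_toReal_measure_of_eventually_subset (hA1 A hA) ?_
  filter_upwards [eventually_ge_atTop N, hA.eventually_ge_atTop 0] with n hn hAn ω hω
  have hBγ : 0 ≤ B * γ n := by simpa using hN n hn 0 (by simp)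
  have hdist : ‖f - g ω‖ ≤ ‖f‖ + M := (norm_sub_le _ _).trans (by linarith [hM ω])
  have hfM : 0 ≤ ‖f‖ + M := (norm_nonneg _).trans hdist
  have hγ : B * γ n * (‖f‖ + M) ≤ B * max (ε n) (γ n) * (‖f‖ + M) := by
    gcongr
    exact le_max_right _ _
  have hε : A n * ε n ≤ A n * max (ε n) (γ n) := by gcongr; exact le_max_left _ _
  have key := abs_integral_sub_le P ι hint (hN n hn) f (g ω)
  have hstab := mul_le_mul_of_nonneg_left hdist hBγ
  simp only [Set.mem_ofPred_eq, A] at hω hε ⊢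
  linarith

/-- Theorem 1: concentration bound for Bayesian probabilistic numerical integration. -/
theorem bpni_concentration {X : Type*} [MeasurableSpace X] {Ω : Type*} [MeasurableSpace Ω]
    (P : Measure X) [IsProbabilityMeasure P]
    {H : Type*} [NormedAddCommGroup H] [NormedSpace ℝ H]
    (ι : H →ₗ[ℝ] X → ℝ) (hint : ∀ h : H, Integrable (ι h) P)
    (x : (n : ℕ) → Fin n → X)
    (g : Ω → H) (f : H) (M : ℝ) (hM : ∀ ω, ‖g ω‖ ≤ M)
    (Post : ℕ → Measure Ω) (hPost : ∀ n, IsProbabilityMeasure (Post n))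
    (ε γ : ℕ → ℝ) (hε : ∀ n, 0 < ε n)
    (hA1 : ∀ A : ℕ → ℝ, Tendsto A atTop atTop →
      Tendsto (fun n => (Post n {ω | A n * ε n <
        Real.sqrt ((1 / n : ℝ) * ∑ i, (ι f (x n i) - ι (g ω) (x n i)) ^ 2)}).toReal)
        atTop (nhds 0))
    (hγ : Tendsto γ atTop (nhds 0))
    (B : ℝ) (hB : 0 < B)
    (hA2 : ∃ N : ℕ, ∀ n ≥ N, ∀ h : H, ‖h‖ ≤ 1 →
      |(1 / n : ℝ) * ∑ i, ι h (x n i) - ∫ y, ι h y ∂P| ≤ B * γ n)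
    (C : ℕ → ℝ) (hC : Tendsto C atTop atTop) :
    Tendsto (fun n => (Post n {ω |
        C n * max (ε n) (γ n) < |∫ y, ι f y ∂P - ∫ y, ι (g ω) y ∂P|}).toReal)
      atTop (nhds 0) :=
  bpni_concentration_general P ι hint x g f M hM Post hPost ε γ hA1 B hB hA2 C hC
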